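/- arXiv:2301.13395 — 4 statements merged into one kernel-verified Lean document; each statement's English description precedes it below -/
import Mathlib

section
/- Let C = C1 ∩ C2 with C1 = {x : Ax = b} and C2 = {x : x ≥ 0}, both nonempty, and let f(x) = wᵀx + (γ/2)‖x‖² with γ > 0. Define, for α ∈ (0, 2/γ), the operator T(z) = z − P_{C2}(z) + P_{C1}((2 − αγ)P_{C2}(z) − z − αw). If z* is a fixed point of T, then x* = P_{C2}(z*) is the unique minimizer of f over C. -/
/-!
At a fixed point `z*` the point `x = P₂ z*` is also `P₁ u` with `u = (2 - αγ) x - z* - α w`.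
The projection inequalities `⟪y - x, x - z*⟫ ≥ 0` (on `C₂`) and `⟪y - x, x - u⟫ ≥ 0` (on `C₁`)
add up to `α ⟪y - x, γ x + w⟫ ≥ 0` for every `y ∈ C`, the first-order optimality condition
for `f` on `C`. Since `f y - f x = ⟪y - x, γ x + w⟫ + γ/2 ‖y - x‖²`, the point `x` is then the
strict minimizer.
-/

open Matrix

lemma inner_sub_nonneg_of_forall_norm_sub_le {E : Type*} [NormedAddCommGroup E]
    [InnerProductSpace ℝ E] {K : Set E} (hK : Convex ℝ K) {z p : E} (hp : p ∈ K)
    (hmin : ∀ x ∈ K, ‖p - z‖ ≤ ‖x - z‖) {y : E} (hy : y ∈ K) :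
    0 ≤ inner ℝ (y - p) (p - z) := by
  have : Nonempty K := ⟨⟨p, hp⟩⟩
  have hinf : ‖z - p‖ = ⨅ x : K, ‖z - x‖ := by
    refine le_antisymm (le_ciInf fun x => ?_) (ciInf_le (f := fun x : K => ‖z - x‖)
      ⟨0, fun _ ⟨_, h⟩ => h ▸ norm_nonneg _⟩ ⟨p, hp⟩)
    simpa only [norm_sub_rev z] using hmin x x.2
  have := (norm_eq_iInf_iff_real_inner_le_zero hK hp).1 hinf y hy
  rw [real_inner_comm, ← neg_sub p z, inner_neg_right] at this
  linarith

section Coordinates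

variable {ι : Type*} [Fintype ι]

def IsSqDistMinOn (K : Set (ι → ℝ)) (z p : ι → ℝ) : Prop :=
  p ∈ K ∧ ∀ x ∈ K, ∑ i, (p i - z i) ^ 2 ≤ ∑ i, (x i - z i) ^ 2

lemma IsSqDistMinOn.sum_sub_mul_sub_nonneg {K : Set (ι → ℝ)} (hK : Convex ℝ K) {z p : ι → ℝ}
    (hp : IsSqDistMinOn K z p) {y : ι → ℝ} (hy : y ∈ K) :
    0 ≤ ∑ i, (y i - p i) * (p i - z i) := by
  have hnorm (x : EuclideanSpace ℝ ι) : ‖x - WithLp.toLp 2 z‖ = √(∑ i, (x i - z i) ^ 2) := by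
    simp [EuclideanSpace.norm_eq, sq_abs]
  have := inner_sub_nonneg_of_forall_norm_sub_le
    (hK.linear_preimage (WithLp.linearEquiv 2 ℝ (ι → ℝ)).toLinearMap) (z := WithLp.toLp 2 z)
    (p := WithLp.toLp 2 p) hp.1 (fun x hx => ?_) (y := WithLp.toLp 2 y) hy
  · simpa [PiLp.inner_apply, mul_comm] using this
  · rw [hnorm, hnorm]
    exact Real.sqrt_le_sqrt (hp.2 _ hx)

lemma sum_sub_mul_grad_nonneg_of_davisYin_fixedPoint {K₁ K₂ : Set (ι → ℝ)}
    (hK₁ : Convex ℝ K₁) (hK₂ : Convex ℝ K₂) {w z x : ι → ℝ} {γ α : ℝ} (hα : 0 < α)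
    (hx₂ : IsSqDistMinOn K₂ z x) (hx₁ : IsSqDistMinOn K₁ ((2 - α * γ) • x - z - α • w) x)
    {y : ι → ℝ} (hy₁ : y ∈ K₁) (hy₂ : y ∈ K₂) :
    0 ≤ ∑ i, (y i - x i) * (γ * x i + w i) := by
  have hsum : ∑ i, (y i - x i) * (x i - z i)
      + ∑ i, (y i - x i) * (x i - ((2 - α * γ) • x - z - α • w) i)
      = α * ∑ i, (y i - x i) * (γ * x i + w i) := by
    simp only [Finset.mul_sum, ← Finset.sum_add_distrib, Pi.sub_apply, Pi.smul_apply,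
      smul_eq_mul]
    exact Finset.sum_congr rfl fun i _ => by ring
  have hαsum := hsum ▸ add_nonneg (hx₂.sum_sub_mul_sub_nonneg hK₂ hy₂)
    (hx₁.sum_sub_mul_sub_nonneg hK₁ hy₁)
  exact (mul_nonneg_iff_of_pos_left hα).1 hαsum

lemma quadratic_sub_eq (w x y : ι → ℝ) (γ : ℝ) :
    (w ⬝ᵥ y + γ / 2 * ∑ i, y i ^ 2) - (w ⬝ᵥ x + γ / 2 * ∑ i, x i ^ 2) =
      ∑ i, (y i - x i) * (γ * x i + w i) + γ / 2 * ∑ i, (y i - x i) ^ 2 := by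
  simp only [dotProduct, Finset.mul_sum, ← Finset.sum_add_distrib, ← Finset.sum_sub_distrib]
  exact Finset.sum_congr rfl fun i _ => by ring

lemma quadratic_lt_of_sum_sub_mul_grad_nonneg {γ : ℝ} (hγ : 0 < γ) {w x y : ι → ℝ}
    (hyx : y ≠ x) (hgrad : 0 ≤ ∑ i, (y i - x i) * (γ * x i + w i)) :
    w ⬝ᵥ x + γ / 2 * ∑ i, x i ^ 2 < w ⬝ᵥ y + γ / 2 * ∑ i, y i ^ 2 := by
  obtain ⟨j, hj⟩ := Function.ne_iff.1 hyx
  have hdist : 0 < ∑ i, (y i - x i) ^ 2 := Finset.sum_pos' (fun i _ => sq_nonneg _)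
    ⟨j, Finset.mem_univ j, sq_pos_iff.2 (sub_ne_zero.2 hj)⟩
  have := quadratic_sub_eq w x y γ
  nlinarith

end Coordinates

theorem stmt4_general {m n : ℕ} (A : Matrix (Fin m) (Fin n) ℝ)
    (b : Fin m → ℝ) (w : Fin n → ℝ) (γ α : ℝ) (hγ : 0 < γ)
    (hα : 0 < α)
    (C1 C2 C : Set (Fin n → ℝ))
    (hC1 : C1 = {x | A.mulVec x = b}) (hC2 : C2 = {x | ∀ i, 0 ≤ x i})
    (hC : C = C1 ∩ C2)
    (P1 P2 : (Fin n → ℝ) → (Fin n → ℝ))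
    (hP1 : ∀ z, P1 z ∈ C1 ∧ ∀ x ∈ C1, ∑ i, (P1 z i - z i) ^ 2 ≤ ∑ i, (x i - z i) ^ 2)
    (hP2 : ∀ z, P2 z ∈ C2 ∧ ∀ x ∈ C2, ∑ i, (P2 z i - z i) ^ 2 ≤ ∑ i, (x i - z i) ^ 2)
    (f : (Fin n → ℝ) → ℝ) (hf : f = fun x => w ⬝ᵥ x + γ / 2 * ∑ i, (x i) ^ 2)
    (T : (Fin n → ℝ) → (Fin n → ℝ))
    (hT : T = fun z => z - P2 z + P1 ((2 - α * γ) • P2 z - z - α • w))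
    (zs : Fin n → ℝ) (hfix : T zs = zs) :
    P2 zs ∈ C ∧ ∀ x ∈ C, x ≠ P2 zs → f (P2 zs) < f x := by
  subst hC1 hC2 hC hf hT
  set u := (2 - α * γ) • P2 zs - zs - α • w
  have hP1u : P1 u = P2 zs := by linear_combination hfix
  have hx₁ : IsSqDistMinOn {x | A *ᵥ x = b} u (P2 zs) := by
    have := hP1 u
    rwa [hP1u] at this
  refine ⟨⟨hx₁.1, (hP2 zs).1⟩, fun y ⟨hy₁, hy₂⟩ hyx => ?_⟩
  have hgrad := sum_sub_mul_grad_nonneg_of_davisYin_fixedPoint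
    ((convex_singleton b).linear_preimage A.mulVecLin) (convex_Ici 0) hα (hP2 zs) hx₁ hy₁ hy₂
  exact quadratic_lt_of_sum_sub_mul_grad_nonneg hγ hyx hgrad

/-- Davis–Yin fixed points: if `z*` is a fixed point of the DYS operator `T`, then
`x* = P_{C2}(z*)` is the unique minimizer of `f(x) = wᵀx + (γ/2)‖x‖²` over `C = C1 ∩ C2`. -/
theorem stmt4 {m n : ℕ} (A : Matrix (Fin m) (Fin n) ℝ) (hA : A.rank = m)
    (b : Fin m → ℝ) (w : Fin n → ℝ) (γ α : ℝ) (hγ : 0 < γ)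
    (hα : 0 < α) (hα2 : α < 2 / γ)
    (C1 C2 C : Set (Fin n → ℝ))
    (hC1 : C1 = {x | A.mulVec x = b}) (hC2 : C2 = {x | ∀ i, 0 ≤ x i})
    (hC : C = C1 ∩ C2) (hCne : C.Nonempty)
    (P1 P2 : (Fin n → ℝ) → (Fin n → ℝ))
    (hP1 : ∀ z, P1 z ∈ C1 ∧ ∀ x ∈ C1, ∑ i, (P1 z i - z i) ^ 2 ≤ ∑ i, (x i - z i) ^ 2)
    (hP2 : ∀ z, P2 z ∈ C2 ∧ ∀ x ∈ C2, ∑ i, (P2 z i - z i) ^ 2 ≤ ∑ i, (x i - z i) ^ 2)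
    (f : (Fin n → ℝ) → ℝ) (hf : f = fun x => w ⬝ᵥ x + γ / 2 * ∑ i, (x i) ^ 2)
    (T : (Fin n → ℝ) → (Fin n → ℝ))
    (hT : T = fun z => z - P2 z + P1 ((2 - α * γ) • P2 z - z - α • w))
    (zs : Fin n → ℝ) (hfix : T zs = zs) :
    P2 zs ∈ C ∧ ∀ x ∈ C, x ≠ P2 zs → f (P2 zs) < f x :=
  stmt4_general A b w γ α hγ hα C1 C2 C hC1 hC2 hC P1 P2 hP1 hP2 f hf T hT zs hfix
end

section
/- Let T be a nonexpansive averaged operator on ℝ^n with a fixed point, and let z^{k+1} = T(z^k). Then ‖z^{k+1} − z^k‖² = O(1/k); more precisely, Σ_{k=0}^{∞} ‖z^{k+1} − z^k‖² < ∞ and ‖z^{k+1} − z^k‖ is nonincreasing, so ‖z^{k+1} − z^k‖² ≤ (1/(k+1)) Σ_{j=0}^{k} ‖z^{j+1} − z^j‖². -/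
/-!
Write `T = (1 - θ) I + θ R` and let `p` be a fixed point of `T`, hence of `R`. Expanding
`‖T x - p‖²` as a convex combination shows that each step decreases `θ ‖x - p‖²` by at least
`(1 - θ) ‖T x - x‖²`, so the squared residuals have a telescoping bound and are summable.
Since `T` is nonexpansive, the residuals are nonincreasing, so the last one is at most the
average of all of them.
-/

open Finset

section Averaged

variable {E : Type*}

lemma norm_one_sub_smul_add_smul_sq [NormedAddCommGroup E] [InnerProductSpace ℝ E]
    (θ : ℝ) (a b : E) :
    ‖(1 - θ) • a + θ • b‖ ^ 2
      = (1 - θ) * ‖a‖ ^ 2 + θ * ‖b‖ ^ 2 - θ * (1 - θ) * ‖a - b‖ ^ 2 := by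
  rw [norm_add_sq_real, norm_sub_sq_real, norm_smul, norm_smul, real_inner_smul_left,
    real_inner_smul_right, mul_pow, mul_pow, Real.norm_eq_abs, Real.norm_eq_abs, sq_abs, sq_abs]
  ring

lemma one_sub_smul_add_smul_sub_self [AddCommGroup E] [Module ℝ E] (θ : ℝ) (x y : E) :
    (1 - θ) • x + θ • y - x = θ • (y - x) := by
  rw [sub_smul, one_smul, smul_sub]; abel

lemma eq_of_one_sub_smul_add_smul_eq [AddCommGroup E] [Module ℝ E] {θ : ℝ} (hθ : θ ≠ 0)
    {x y : E} (h : (1 - θ) • x + θ • y = x) : y = x := by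
  rw [← sub_eq_zero, one_sub_smul_add_smul_sub_self, smul_eq_zero] at h
  exact sub_eq_zero.1 (h.resolve_left hθ)

lemma norm_averaged_sub_le [SeminormedAddCommGroup E] [NormedSpace ℝ E] {R : E → E} {θ : ℝ}
    (hθ0 : 0 ≤ θ) (hθ1 : θ ≤ 1) (hR : ∀ a b, ‖R a - R b‖ ≤ ‖a - b‖) (a b : E) :
    ‖((1 - θ) • a + θ • R a) - ((1 - θ) • b + θ • R b)‖ ≤ ‖a - b‖ :=
  calc ‖((1 - θ) • a + θ • R a) - ((1 - θ) • b + θ • R b)‖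
      = ‖(1 - θ) • (a - b) + θ • (R a - R b)‖ := by
        rw [smul_sub, smul_sub]; congr 1; abel
    _ ≤ (1 - θ) * ‖a - b‖ + θ * ‖R a - R b‖ := by
        grw [norm_add_le, norm_smul, norm_smul, Real.norm_of_nonneg hθ0,
          Real.norm_of_nonneg (sub_nonneg.2 hθ1)]
    _ ≤ (1 - θ) * ‖a - b‖ + θ * ‖a - b‖ := by grw [hR a b]
    _ = ‖a - b‖ := by ring

/-- Holds for every real `θ`: the gap between the two sides is `θ² (‖x - p‖² - ‖y - p‖²)`. -/
lemma one_sub_mul_norm_averaged_sub_sq_le [NormedAddCommGroup E] [InnerProductSpace ℝ E]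
    (θ : ℝ) {p x y : E} (hy : ‖y - p‖ ≤ ‖x - p‖) :
    (1 - θ) * ‖(1 - θ) • x + θ • y - x‖ ^ 2
      ≤ θ * (‖x - p‖ ^ 2 - ‖(1 - θ) • x + θ • y - p‖ ^ 2) := by
  have hsplit : (1 - θ) • x + θ • y - p = (1 - θ) • (x - p) + θ • (y - p) := by
    rw [smul_sub, smul_sub, sub_smul, one_smul, sub_smul, one_smul]; abel
  have hdiff : (x - p) - (y - p) = -(y - x) := by abel
  rw [one_sub_smul_add_smul_sub_self, hsplit, norm_one_sub_smul_add_smul_sq, hdiff, norm_neg,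
    norm_smul, mul_pow, Real.norm_eq_abs, sq_abs]
  have hy_sq := pow_le_pow_left₀ (norm_nonneg _) hy 2
  linarith [mul_nonneg (sq_nonneg θ) (sub_nonneg.2 hy_sq)]

end Averaged

lemma summable_of_mul_le_sub_succ {a b : ℕ → ℝ} {c : ℝ} (hc : 0 < c) (ha : ∀ k, 0 ≤ a k)
    (hb : ∀ k, 0 ≤ b k) (h : ∀ k, c * a k ≤ b k - b (k + 1)) : Summable a := by
  refine summable_of_sum_range_le ha (c := b 0 / c) fun m => ?_
  rw [le_div_iff₀' hc, mul_sum]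
  calc ∑ k ∈ range m, c * a k ≤ ∑ k ∈ range m, (b k - b (k + 1)) := sum_le_sum fun k _ => h k
    _ = b 0 - b m := sum_range_sub' b m
    _ ≤ b 0 := sub_le_self _ (hb m)

lemma antitone_norm_succ_sub {E : Type*} [SeminormedAddCommGroup E] {T : E → E}
    (hT : ∀ a b, ‖T a - T b‖ ≤ ‖a - b‖) {z : ℕ → E} (hz : ∀ k, z (k + 1) = T (z k)) :
    Antitone fun k => ‖z (k + 1) - z k‖ :=
  antitone_nat_of_succ_le fun k => by rw [hz (k + 1), hz k]; exact hT _ _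

lemma Antitone.le_average_sum_range {a : ℕ → ℝ} (ha : Antitone a) (k : ℕ) :
    a k ≤ (1 / (k + 1 : ℝ)) * ∑ j ∈ range (k + 1), a j := by
  have hsum : (range (k + 1)).card • a k ≤ ∑ j ∈ range (k + 1), a j :=
    card_nsmul_le_sum _ _ _ fun j hj => ha (Nat.lt_succ_iff.1 (mem_range.1 hj))
  rw [card_range, nsmul_eq_mul] at hsum
  rw [one_div, inv_mul_eq_div, le_div_iff₀' (by positivity)]
  exact_mod_cast hsum

/-- Krasnosel'skii–Mann iteration of an averaged operator with a fixed point: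
the squared residuals are summable, the residual norms are nonincreasing, and hence
`‖z^{k+1} − z^k‖² ≤ (1/(k+1)) Σ_{j=0}^{k} ‖z^{j+1} − z^j‖²` (the `O(1/k)` rate). -/
theorem stmt5 {n : ℕ} (T R : EuclideanSpace ℝ (Fin n) → EuclideanSpace ℝ (Fin n))
    (θ : ℝ) (hθ : θ ∈ Set.Ioo (0 : ℝ) 1)
    (hR : ∀ a b, ‖R a - R b‖ ≤ ‖a - b‖)
    (hT : T = fun z => (1 - θ) • z + θ • R z)
    (hfix : ∃ z, T z = z)
    (z : ℕ → EuclideanSpace ℝ (Fin n)) (hz : ∀ k, z (k + 1) = T (z k)) :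
    (Summable fun k => ‖z (k + 1) - z k‖ ^ 2) ∧
    (∀ k, ‖z (k + 2) - z (k + 1)‖ ≤ ‖z (k + 1) - z k‖) ∧
    (∀ k, ‖z (k + 1) - z k‖ ^ 2 ≤
      (1 / (k + 1 : ℝ)) * ∑ j ∈ Finset.range (k + 1), ‖z (j + 1) - z j‖ ^ 2) := by
  obtain ⟨hθ0, hθ1⟩ := hθ
  obtain ⟨p, hp⟩ := hfix
  subst hT
  have hRp : R p = p := eq_of_one_sub_smul_add_smul_eq hθ0.ne' hp
  have hres : Antitone fun k => ‖z (k + 1) - z k‖ :=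
    antitone_norm_succ_sub (norm_averaged_sub_le hθ0.le hθ1.le hR) hz
  refine ⟨?_, fun k => hres k.le_succ, ?_⟩
  · refine summable_of_mul_le_sub_succ (b := fun k => θ * ‖z k - p‖ ^ 2) (sub_pos.2 hθ1)
      (fun k => sq_nonneg _) (fun k => by positivity) fun k => ?_
    rw [← mul_sub, hz k]
    exact one_sub_mul_norm_averaged_sub_sq_le θ (by simpa only [hRp] using hR (z k) p)
  · exact Antitone.le_average_sum_range fun i j hij =>
      pow_le_pow_left₀ (norm_nonneg _) (hres hij) 2
end

section
/- Let H1, H2 be subspaces of ℝ^n with H1^⊥ ∩ H2^⊥ = {0}, let cos(τ) < 1 be the cosine of the first principal angle between H1^⊥ and H2^⊥ (taken as 0 if either subspace is trivial), and let σ ∈ (−1, 1). Then the operator M = P_{H1^⊥}P_{H2^⊥} + σ·P_{H1}P_{H2} has operator norm ‖M‖ ≤ √(max{cos(τ), σ²}) < 1. -/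
/-!
Split `w = P_{H2} w + P_{H2ᗮ} w`. The two summands of `M w` lie in the orthogonal subspaces
`H1ᗮ` and `H1`, so `‖M w‖² = ‖P_{H1ᗮ} P_{H2ᗮ} w‖² + σ² ‖P_{H1} P_{H2} w‖²`. Since
`‖P v‖² = ⟪P v, v⟫` for an orthogonal projection `P`, the principal-angle bound
`⟪u, v⟫ ≤ m ‖u‖ ‖v‖` on `H1ᗮ × H2ᗮ`, with `m = max c σ² ≥ 0`, gives `‖P_{H1ᗮ} v‖ ≤ m ‖v‖` for
`v ∈ H2ᗮ`. Together with nonexpansiveness of projections and Pythagoras for the splitting of `w`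
this yields `‖M w‖² ≤ m ‖w‖²`.
-/

open scoped RealInnerProductSpace

/-- Orthogonal projection onto a subspace of Euclidean space, as a map into the space. -/
noncomputable def projSub {n : ℕ} (K : Submodule ℝ (EuclideanSpace ℝ (Fin n))) :
    EuclideanSpace ℝ (Fin n) →L[ℝ] EuclideanSpace ℝ (Fin n) :=
  K.subtypeL.comp (K.orthogonalProjection)

theorem projSub_eq_starProjection {n : ℕ} (K : Submodule ℝ (EuclideanSpace ℝ (Fin n))) :
    projSub K = K.starProjection :=
  rfl

namespace Submodule

variable {E : Type*} [NormedAddCommGroup E] [InnerProductSpace ℝ E]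

theorem real_inner_starProjection_self (K : Submodule ℝ E) [K.HasOrthogonalProjection] (v : E) :
    ⟪K.starProjection v, v⟫ = ‖K.starProjection v‖ ^ 2 :=
  K.re_inner_starProjection_eq_normSq v

theorem real_inner_le_mul_norm_mul_norm_of_forall_norm_eq_one {K L : Submodule ℝ E} {c : ℝ}
    (hc : ∀ u ∈ K, ∀ v ∈ L, ‖u‖ = 1 → ‖v‖ = 1 → ⟪u, v⟫ ≤ c) {u v : E} (hu : u ∈ K) (hv : v ∈ L) :
    ⟪u, v⟫ ≤ c * (‖u‖ * ‖v‖) := by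
  rcases eq_or_ne u 0 with rfl | hu0
  · simp
  rcases eq_or_ne v 0 with rfl | hv0
  · simp
  have hunit := hc _ (K.smul_mem ‖u‖⁻¹ hu) _ (L.smul_mem ‖v‖⁻¹ hv)
    (norm_smul_inv_norm hu0) (norm_smul_inv_norm hv0)
  rw [real_inner_smul_left, real_inner_smul_right, ← mul_assoc, ← mul_inv] at hunit
  rwa [inv_mul_le_iff₀ (by positivity), mul_comm] at hunit

theorem norm_starProjection_le_of_real_inner_le {K L : Submodule ℝ E} [K.HasOrthogonalProjection]
    {c : ℝ} (hc0 : 0 ≤ c) (hc : ∀ u ∈ K, ∀ v ∈ L, ⟪u, v⟫ ≤ c * (‖u‖ * ‖v‖)) {v : E}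
    (hv : v ∈ L) : ‖K.starProjection v‖ ≤ c * ‖v‖ := by
  have hsq : ‖K.starProjection v‖ ^ 2 ≤ c * (‖K.starProjection v‖ * ‖v‖) := by
    rw [← real_inner_starProjection_self]
    exact hc _ (K.starProjection_apply_mem v) v hv
  rcases (norm_nonneg (K.starProjection v)).eq_or_lt with h0 | hpos
  · rw [← h0]
    positivity
  · nlinarith

theorem norm_sq_starProjection_orthogonal_add_smul_starProjection (K : Submodule ℝ E)
    [K.HasOrthogonalProjection] (σ : ℝ) (x y : E) :
    ‖Kᗮ.starProjection x + σ • K.starProjection y‖ ^ 2 =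
      ‖Kᗮ.starProjection x‖ ^ 2 + σ ^ 2 * ‖K.starProjection y‖ ^ 2 := by
  have horth : ⟪Kᗮ.starProjection x, σ • K.starProjection y⟫ = 0 :=
    inner_left_of_mem_orthogonal (K.smul_mem σ (K.starProjection_apply_mem y))
      (Kᗮ.starProjection_apply_mem x)
  rw [sq, norm_add_sq_eq_norm_sq_add_norm_sq_of_inner_eq_zero _ _ horth, norm_smul,
    Real.norm_eq_abs]
  nlinarith [sq_abs σ]

theorem norm_starProjection_comp_add_smul_starProjection_comp_le {K L : Submodule ℝ E}
    [K.HasOrthogonalProjection] [L.HasOrthogonalProjection] {c : ℝ} (σ : ℝ)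
    (hc : ∀ u ∈ Kᗮ, ∀ v ∈ Lᗮ, ⟪u, v⟫ ≤ c * (‖u‖ * ‖v‖)) :
    ‖Kᗮ.starProjection ∘L Lᗮ.starProjection + σ • K.starProjection ∘L L.starProjection‖ ≤
      √(max c (σ ^ 2)) := by
  set m := max c (σ ^ 2)
  have hm : 0 ≤ m := (sq_nonneg σ).trans (le_max_right _ _)
  have hcm : ∀ u ∈ Kᗮ, ∀ v ∈ Lᗮ, ⟪u, v⟫ ≤ m * (‖u‖ * ‖v‖) := fun u hu v hv =>
    (hc u hu v hv).trans (mul_le_mul_of_nonneg_right (le_max_left _ _) (by positivity))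
  refine ContinuousLinearMap.opNorm_le_bound _ (Real.sqrt_nonneg _) fun w => ?_
  set w₁ := L.starProjection w
  set w₂ := Lᗮ.starProjection w
  have ha : ‖Kᗮ.starProjection w₂‖ ≤ m * ‖w₂‖ :=
    norm_starProjection_le_of_real_inner_le hm hcm (Lᗮ.starProjection_apply_mem w)
  have ha' : ‖Kᗮ.starProjection w₂‖ ≤ ‖w₂‖ := Kᗮ.norm_starProjection_apply_le w₂
  have hb : ‖K.starProjection w₁‖ ≤ ‖w₁‖ := K.norm_starProjection_apply_le w₁
  rw [← Real.sqrt_sq (norm_nonneg w), ← Real.sqrt_mul hm]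
  refine (Real.le_sqrt (norm_nonneg _) (by positivity)).2 ?_
  calc ‖Kᗮ.starProjection w₂ + σ • K.starProjection w₁‖ ^ 2
      = ‖Kᗮ.starProjection w₂‖ ^ 2 + σ ^ 2 * ‖K.starProjection w₁‖ ^ 2 :=
        K.norm_sq_starProjection_orthogonal_add_smul_starProjection σ w₂ w₁
    _ ≤ m * ‖w₂‖ ^ 2 + m * ‖w₁‖ ^ 2 := by
        gcongr
        · nlinarith [norm_nonneg (Kᗮ.starProjection w₂)]
        · exact le_max_right _ _
    _ = m * ‖w‖ ^ 2 := by rw [L.norm_sq_eq_add_norm_sq_starProjection w]; ring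

end Submodule

theorem stmt14_general {n : ℕ} (H1 H2 : Submodule ℝ (EuclideanSpace ℝ (Fin n)))
    (c σ : ℝ) (hσ : σ ∈ Set.Ioo (-1 : ℝ) 1)
    (hcmax : H1ᗮ ≠ ⊥ → H2ᗮ ≠ ⊥ →
      IsGreatest {r | ∃ u ∈ H1ᗮ, ∃ v ∈ H2ᗮ, ‖u‖ = 1 ∧ ‖v‖ = 1 ∧ r = ⟪u, v⟫} c)
    (hc1 : c < 1)
    (M : EuclideanSpace ℝ (Fin n) →L[ℝ] EuclideanSpace ℝ (Fin n))
    (hM : M = (projSub H1ᗮ).comp (projSub H2ᗮ) + σ • (projSub H1).comp (projSub H2)) :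
    ‖M‖ ≤ Real.sqrt (max c (σ ^ 2)) ∧ Real.sqrt (max c (σ ^ 2)) < 1 := by
  have ne_bot_of_norm_eq_one {K : Submodule ℝ (EuclideanSpace ℝ (Fin n))} {u}
      (hu : u ∈ K) (hu1 : ‖u‖ = 1) : K ≠ ⊥ :=
    K.ne_bot_iff.2 ⟨u, hu, norm_ne_zero_iff.1 (by simp [hu1])⟩
  have hc : ∀ u ∈ H1ᗮ, ∀ v ∈ H2ᗮ, ‖u‖ = 1 → ‖v‖ = 1 → ⟪u, v⟫ ≤ c :=
    fun u hu v hv hu1 hv1 =>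
      (hcmax (ne_bot_of_norm_eq_one hu hu1) (ne_bot_of_norm_eq_one hv hv1)).2
        ⟨u, hu, v, hv, hu1, hv1, rfl⟩
  have hσ2 : σ ^ 2 < 1 := (sq_lt_one_iff_abs_lt_one σ).2 (abs_lt.2 hσ)
  subst hM
  simp only [projSub_eq_starProjection]
  refine ⟨Submodule.norm_starProjection_comp_add_smul_starProjection_comp_le σ
    fun u hu v hv => Submodule.real_inner_le_mul_norm_mul_norm_of_forall_norm_eq_one hc hu hv, ?_⟩
  exact (Real.sqrt_lt' one_pos).2 (by rw [one_pow]; exact max_lt hc1 hσ2)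

/-- Norm bound for the DYS Jacobian: if `H1^⊥ ∩ H2^⊥ = {0}`, `cos τ < 1` is the cosine of the
first principal angle between `H1^⊥` and `H2^⊥` (taken to be `0` if either is trivial), and
`σ ∈ (−1,1)`, then `M = P_{H1^⊥}P_{H2^⊥} + σ P_{H1}P_{H2}` satisfies
`‖M‖ ≤ √(max{cos τ, σ²}) < 1`. -/
theorem stmt14 {n : ℕ} (H1 H2 : Submodule ℝ (EuclideanSpace ℝ (Fin n)))
    (h : H1ᗮ ⊓ H2ᗮ = ⊥) (c σ : ℝ) (hσ : σ ∈ Set.Ioo (-1 : ℝ) 1)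
    (hc0 : (H1ᗮ = ⊥ ∨ H2ᗮ = ⊥) → c = 0)
    (hcmax : H1ᗮ ≠ ⊥ → H2ᗮ ≠ ⊥ →
      IsGreatest {r | ∃ u ∈ H1ᗮ, ∃ v ∈ H2ᗮ, ‖u‖ = 1 ∧ ‖v‖ = 1 ∧ r = ⟪u, v⟫} c)
    (hc1 : c < 1)
    (M : EuclideanSpace ℝ (Fin n) →L[ℝ] EuclideanSpace ℝ (Fin n))
    (hM : M = (projSub H1ᗮ).comp (projSub H2ᗮ) + σ • (projSub H1).comp (projSub H2)) :
    ‖M‖ ≤ Real.sqrt (max c (σ ^ 2)) ∧ Real.sqrt (max c (σ ^ 2)) < 1 :=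
  stmt14_general H1 H2 c σ hσ hcmax hc1 M hM
end

section
/- Fix α, γ with 0 < αγ < 2, and subspaces H1, H2 of ℝ^n whose orthogonal complements intersect trivially (H1^⊥ ∩ H2^⊥ = {0}). Then the matrix J = I − M, where M = P_{H1^⊥}P_{H2^⊥} + (1 − αγ)P_{H1}P_{H2}, is invertible. -/
namespace Submodule

variable {𝕜 E : Type*} [RCLike 𝕜] [NormedAddCommGroup E] [InnerProductSpace 𝕜 E]
  {K L : Submodule 𝕜 E} [K.HasOrthogonalProjection] [L.HasOrthogonalProjection]

theorem starProjection_eq_zero_of_apply_eq_self {c : 𝕜} (hc : ‖c‖ < 1) {x : E}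
    (hx : (Kᗮ.starProjection ∘L Lᗮ.starProjection + c • K.starProjection ∘L L.starProjection) x
      = x) :
    L.starProjection x = 0 := by
  simp only [add_apply, ContinuousLinearMap.comp_apply, smul_apply] at hx
  have hK : K.starProjection x = c • K.starProjection (L.starProjection x) := by
    conv_lhs => rw [← hx]
    rw [map_add, map_smul, (starProjection_apply_eq_zero_iff _).2 (starProjection_apply_mem _ _),
      starProjection_eq_self_iff.2 (starProjection_apply_mem _ _), zero_add]
  have hKperp : Kᗮ.starProjection x = Kᗮ.starProjection (Lᗮ.starProjection x) := by
    conv_lhs => rw [← hx]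
    rw [map_add, map_smul, starProjection_orthogonal_apply_eq_zero (starProjection_apply_mem _ _),
      starProjection_eq_self_iff.2 (starProjection_apply_mem _ _), smul_zero, add_zero]
  have hle : ‖x‖ ^ 2 ≤ (‖c‖ * ‖L.starProjection x‖) ^ 2 + ‖Lᗮ.starProjection x‖ ^ 2 :=
    calc ‖x‖ ^ 2 = ‖K.starProjection x‖ ^ 2 + ‖Kᗮ.starProjection x‖ ^ 2 :=
          norm_sq_eq_add_norm_sq_starProjection x K
      _ = (‖c‖ * ‖K.starProjection (L.starProjection x)‖) ^ 2
            + ‖Kᗮ.starProjection (Lᗮ.starProjection x)‖ ^ 2 := by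
          rw [hK, hKperp, norm_smul]
      _ ≤ _ := by gcongr <;> exact norm_starProjection_apply_le _ _
  have hdefect : (1 - ‖c‖ ^ 2) * ‖L.starProjection x‖ ^ 2 ≤ 0 := by
    nlinarith [norm_sq_eq_add_norm_sq_starProjection x L]
  have hc' : 0 < 1 - ‖c‖ ^ 2 := by nlinarith [norm_nonneg c]
  simpa using nonpos_of_mul_nonpos_right hdefect hc'

theorem mem_inf_orthogonal_of_apply_eq_self {c : 𝕜} (hc : ‖c‖ < 1) {x : E}
    (hx : (Kᗮ.starProjection ∘L Lᗮ.starProjection + c • K.starProjection ∘L L.starProjection) x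
      = x) :
    x ∈ Kᗮ ⊓ Lᗮ := by
  have hxL : x ∈ Lᗮ :=
    (starProjection_apply_eq_zero_iff _).1 (starProjection_eq_zero_of_apply_eq_self hc hx)
  refine mem_inf.2 ⟨?_, hxL⟩
  rw [← starProjection_eq_self_iff]
  simpa [starProjection_eq_self_iff.2 hxL, (starProjection_apply_eq_zero_iff _).2 hxL] using hx

end Submodule

theorem ContinuousLinearMap.isUnit_one_sub_of_apply_eq_self {𝕜 E : Type*}
    [NontriviallyNormedField 𝕜] [CompleteSpace 𝕜] [NormedAddCommGroup E] [NormedSpace 𝕜 E]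
    [FiniteDimensional 𝕜 E] {M : E →L[𝕜] E} (hfix : ∀ x, M x = x → x = 0) :
    IsUnit (1 - M) := by
  have hinj : Function.Injective ⇑(1 - M) :=
    (injective_iff_map_eq_zero _).2 fun x hx ↦ hfix x (sub_eq_zero.1 hx).symm
  have : CompleteSpace E := FiniteDimensional.complete 𝕜 E
  exact isUnit_iff_bijective.2 ⟨hinj, LinearMap.injective_iff_surjective.1 hinj⟩

/-- If `0 < αγ < 2` and `H1^⊥ ∩ H2^⊥ = {0}`, the matrix `J = I − M` with
`M = P_{H1^⊥}P_{H2^⊥} + (1 − αγ)P_{H1}P_{H2}` is invertible. -/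
theorem stmt19 {n : ℕ} (H1 H2 : Submodule ℝ (EuclideanSpace ℝ (Fin n)))
    (h : H1ᗮ ⊓ H2ᗮ = ⊥) (α γ : ℝ) (h1 : 0 < α * γ) (h2 : α * γ < 2)
    (M : EuclideanSpace ℝ (Fin n) →L[ℝ] EuclideanSpace ℝ (Fin n))
    (hM : M = (projSub H1ᗮ).comp (projSub H2ᗮ) + (1 - α * γ) • (projSub H1).comp (projSub H2)) :
    IsUnit ((1 : EuclideanSpace ℝ (Fin n) →L[ℝ] EuclideanSpace ℝ (Fin n)) - M) := by
  have hc : ‖1 - α * γ‖ < 1 := by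
    rw [Real.norm_eq_abs, abs_lt]
    constructor <;> linarith
  refine ContinuousLinearMap.isUnit_one_sub_of_apply_eq_self fun x hx ↦ ?_
  subst hM
  simpa [h] using Submodule.mem_inf_orthogonal_of_apply_eq_self hc hx
end
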